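/- arXiv:1511.01532 — 2 statements merged into one kernel-verified Lean document; each statement's English description precedes it below -/
import Mathlib

section
/- In an approximate categorical structure, given f,f' ∈ A(x,y), g,g' ∈ A(y,z) and h,h' ∈ A(x,z), we have d(f,g,h) ≤ d(f',g',h') + φ(f,f') + φ(g,g') + φ(h,h'). -/
/-- An approximate categorical structure (AC structure): a graph with identities
and a triangular distance function satisfying the identity axioms and the
left/right associativity (tetrahedral) inequalities. -/
structure ACStruct where
  Obj : Type
  Hom : Obj → Obj → Type
  ident : ∀ x, Hom x x
  d : ∀ {x y z}, Hom x y → Hom y z → Hom x z → ℝ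
  left_ident : ∀ {x y} (f : Hom x y), d f (ident y) f = 0
  right_ident : ∀ {x y} (f : Hom x y), d (ident x) f f = 0
  left_assoc : ∀ {x y z w} (f : Hom x y) (g : Hom y z) (h : Hom z w)
      (a : Hom x z) (b : Hom y w) (c : Hom x w),
      d a h c ≤ d f g a + d g h b + d f b c
  right_assoc : ∀ {x y z w} (f : Hom x y) (g : Hom y z) (h : Hom z w)
      (a : Hom x z) (b : Hom y w) (c : Hom x w),
      d f b c ≤ d f g a + d g h b + d a h c

/-- The induced pseudometric on arrow sets: φ(f,g) := d(1_x, f, g). -/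
noncomputable def ACStruct.φ (S : ACStruct) {x y : S.Obj} (f g : S.Hom x y) : ℝ :=
  S.d (S.ident x) f g

/-!
Inserting identity arrows into the two associativity inequalities and using the identity axioms
turns each of them into a triangle inequality: any one argument of `d` may be replaced by another
arrow at the cost of their `φ`-distance. Applied to identities these make `φ` symmetric, and
replacing the three arguments one at a time gives the bound.
-/

namespace ACStruct

variable (S : ACStruct) {x y z : S.Obj}

theorem d_le_d_add_φ_left (a g : S.Hom x y) (h : S.Hom y z) (c : S.Hom x z) :
    S.d a h c ≤ S.d g h c + S.φ g a := by
  have := S.left_assoc (S.ident x) g h a c c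
  rw [S.right_ident c] at this
  rw [φ]
  linarith

theorem d_le_d_add_φ_middle (f : S.Hom x y) (b h : S.Hom y z) (c : S.Hom x z) :
    S.d f b c ≤ S.d f h c + S.φ h b := by
  have := S.right_assoc f (S.ident y) h f b c
  rw [S.left_ident f] at this
  rw [φ]
  linarith

theorem d_le_d_add_φ_right (g : S.Hom x y) (h : S.Hom y z) (b c : S.Hom x z) :
    S.d g h c ≤ S.d g h b + S.φ b c := by
  have := S.left_assoc (S.ident x) g h g b c
  rw [S.right_ident g] at this
  rw [φ]
  linarith

theorem φ_comm (f g : S.Hom x y) : S.φ f g = S.φ g f := by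
  have key : ∀ a b : S.Hom x y, S.φ a b ≤ S.φ b a := fun a b => by
    simpa [φ, S.right_ident] using S.d_le_d_add_φ_middle (S.ident x) a b b
  exact le_antisymm (key f g) (key g f)

end ACStruct

theorem stmt9 (S : ACStruct) {x y z : S.Obj}
    (f f' : S.Hom x y) (g g' : S.Hom y z) (h h' : S.Hom x z) :
    S.d f g h ≤ S.d f' g' h' + S.φ f f' + S.φ g g' + S.φ h h' := by
  have hf := S.d_le_d_add_φ_left f f' g h
  have hg := S.d_le_d_add_φ_middle f' g g' h
  have hh := S.d_le_d_add_φ_right f' g' h' h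
  rw [S.φ_comm f f', S.φ_comm g g', S.φ_comm h h']
  linarith
end

section
/- Let (X,A,d) be a separated 0-categoric AC structure: for any f ∈ A(x,y), g ∈ A(y,z) there is h ∈ A(x,z) with d(f,g,h)=0. Then this h is unique (denoted g∘f), the operation ∘ is associative with units 1_x, and composition is nonincreasing: φ(g∘f, g'∘f') ≤ φ(f,f') + φ(g,g'). -/
/-! Specialising one face of a tetrahedral inequality to an identity face `d(f, 1, f) = 0` or
`d(1, f, f) = 0` shows that `d ≥ 0` and that `φ(h, h') ≤ d(f, g, h')` whenever `d(f, g, h) = 0`.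
So a zero of `d(f, g, ·)` is unique by separation, and associativity of the resulting composition
and the bound on `φ` of composites are each a single instance of the two inequalities. -/

namespace ACStruct

variable (S : ACStruct)

def Separated : Prop :=
  ∀ {x y : S.Obj} (f f' : S.Hom x y), S.φ f f' = 0 → f = f'

variable {S} {x y z w : S.Obj}

theorem d_nonneg (f : S.Hom x y) (g : S.Hom y z) (a : S.Hom x z) : 0 ≤ S.d f g a := by
  have h := S.left_assoc f g (S.ident z) a g a
  rw [S.left_ident, S.left_ident] at h
  linarith

theorem φ_self (f : S.Hom x y) : S.φ f f = 0 :=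
  S.right_ident f

theorem φ_le_φ_add_d {f f' : S.Hom x y} {g : S.Hom y z} {h : S.Hom x z}
    (hh : S.d f g h = 0) (h' : S.Hom x z) : S.φ h h' ≤ S.φ f f' + S.d f' g h' := by
  have := S.right_assoc (S.ident x) f g f' h h'
  rw [hh] at this
  simpa only [φ, add_zero] using this

theorem φ_le_d {f : S.Hom x y} {g : S.Hom y z} {h : S.Hom x z}
    (hh : S.d f g h = 0) (h' : S.Hom x z) : S.φ h h' ≤ S.d f g h' := by
  simpa only [φ_self, zero_add] using φ_le_φ_add_d (f' := f) hh h'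

theorem d_le_φ {f : S.Hom x y} {g g' : S.Hom y z} {h : S.Hom x z}
    (hh : S.d f g' h = 0) : S.d f g h ≤ S.φ g g' := by
  have := S.left_assoc f (S.ident y) g f g' h
  rw [S.left_ident, hh] at this
  simpa only [φ, zero_add, add_zero] using this

theorem eq_of_d_eq_zero (sep : S.Separated) {f : S.Hom x y} {g : S.Hom y z} {h h' : S.Hom x z}
    (hh : S.d f g h = 0) (hh' : S.d f g h' = 0) : h = h' :=
  sep h h' <| le_antisymm (hh' ▸ φ_le_d hh h') (d_nonneg _ _ _)

theorem d_eq_zero_of_assoc {f : S.Hom x y} {g : S.Hom y z} {h : S.Hom z w}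
    {a : S.Hom x z} {b : S.Hom y w} {c : S.Hom x w}
    (ha : S.d f g a = 0) (hb : S.d g h b = 0) (hc : S.d f b c = 0) : S.d a h c = 0 := by
  have := S.left_assoc f g h a b c
  rw [ha, hb, hc] at this
  linarith [d_nonneg a h c]

end ACStruct

theorem stmt15 (S : ACStruct)
    (sep : ∀ {x y : S.Obj} (f f' : S.Hom x y), S.φ f f' = 0 → f = f')
    (cat0 : ∀ {x y z : S.Obj} (f : S.Hom x y) (g : S.Hom y z),
      ∃ h : S.Hom x z, S.d f g h = 0) :
    ∃ comp : ∀ x y z : S.Obj, S.Hom x y → S.Hom y z → S.Hom x z,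
      (∀ (x y z : S.Obj) (f : S.Hom x y) (g : S.Hom y z),
        S.d f g (comp x y z f g) = 0) ∧
      (∀ (x y z : S.Obj) (f : S.Hom x y) (g : S.Hom y z) (h : S.Hom x z),
        S.d f g h = 0 → h = comp x y z f g) ∧
      (∀ (x y : S.Obj) (f : S.Hom x y), comp x y y f (S.ident y) = f) ∧
      (∀ (x y : S.Obj) (f : S.Hom x y), comp x x y (S.ident x) f = f) ∧
      (∀ (x y z w : S.Obj) (f : S.Hom x y) (g : S.Hom y z) (h : S.Hom z w),
        comp x z w (comp x y z f g) h = comp x y w f (comp y z w g h)) ∧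
      (∀ (x y z : S.Obj) (f f' : S.Hom x y) (g g' : S.Hom y z),
        S.φ (comp x y z f g) (comp x y z f' g') ≤ S.φ f f' + S.φ g g') := by
  choose comp hcomp using fun x y z => @cat0 x y z
  have uniq : ∀ (x y z : S.Obj) (f : S.Hom x y) (g : S.Hom y z) (h : S.Hom x z),
      S.d f g h = 0 → h = comp x y z f g :=
    fun _ _ _ f g _ hh => ACStruct.eq_of_d_eq_zero sep hh (hcomp _ _ _ f g)
  refine ⟨comp, hcomp, uniq, ?_, ?_, ?_, ?_⟩
  · exact fun _ y f => (uniq _ _ _ f (S.ident y) f (S.left_ident f)).symm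
  · exact fun x _ f => (uniq _ _ _ (S.ident x) f f (S.right_ident f)).symm
  · exact fun _ _ _ _ f g h => (uniq _ _ _ _ _ _ <| ACStruct.d_eq_zero_of_assoc
      (hcomp _ _ _ f g) (hcomp _ _ _ g h) (hcomp _ _ _ f (comp _ _ _ g h))).symm
  · exact fun _ _ _ f f' g g' => (ACStruct.φ_le_φ_add_d (f' := f') (hcomp _ _ _ f g) _).trans
      (add_le_add_right (ACStruct.d_le_φ (hcomp _ _ _ f' g')) _)
end
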